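/- arXiv:2002.06347 — 2 statements merged into one kernel-verified Lean document; each statement's English description precedes it below -/
import Mathlib

section
/- Let U be an open set in ℝ². Then for all φ ∈ H¹₀(U), the Ladyzhenskaya inequality ‖φ‖_{L⁴(U)} ≤ √2 ‖φ‖_{L²(U)}^{1/2} ‖∇φ‖_{L²(U)}^{1/2} holds. -/
open MeasureTheory Set Filter
open scoped ENNReal NNReal Topology

section LadyzhenskayaAux


lemma key1 {ψ : EuclideanSpace ℝ (Fin 2) → ℝ} (hψ : ContDiff ℝ 1 ψ)
    (h2ψ : HasCompactSupport ψ)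
    {e : EuclideanSpace ℝ (Fin 2)} (he : ‖e‖ = 1) (c : EuclideanSpace ℝ (Fin 2)) (a : ℝ) :
    (‖ψ (c + a • e)‖₊ : ℝ≥0∞) ^ (2:ℕ) ≤
      2 * ∫⁻ t : ℝ, (‖ψ (c + t • e)‖₊ : ℝ≥0∞) * ‖fderiv ℝ ψ (c + t • e)‖₊ := by
  set L : ℝ → EuclideanSpace ℝ (Fin 2) := fun t => c + t • e with hLdef
  have hLd : ∀ t : ℝ, HasDerivAt L e t := by
    intro t
    simpa [L] using (((hasDerivAt_id t).smul_const e).const_add c)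
  have hLc : ContDiff ℝ 1 L := contDiff_const.add (contDiff_id.smul contDiff_const)
  have hLiso : Isometry L := by
    apply Isometry.of_dist_eq
    intro s t
    simp only [L, dist_eq_norm, add_sub_add_left_eq_sub, ← sub_smul, norm_smul, he, mul_one,
      Real.norm_eq_abs]
  set g : ℝ → ℝ := fun t => ψ (L t) with hgdef
  have hgc : ContDiff ℝ 1 g := hψ.comp hLc
  have hgK : HasCompactSupport g := h2ψ.comp_isClosedEmbedding hLiso.isClosedEmbedding
  have hgd : ∀ t : ℝ, HasDerivAt g (fderiv ℝ ψ (L t) e) t := fun t =>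
    ((hψ.differentiable one_ne_zero (L t)).hasFDerivAt).comp_hasDerivAt t (hLd t)
  set w : ℝ → ℝ := fun t => g t ^ 2 with hwdef
  have hwc : ContDiff ℝ 1 w := hgc.pow 2
  have hwK : HasCompactSupport w := hgK.comp_left (g := fun r : ℝ => r ^ 2) (by simp)
  have hwd : ∀ t : ℝ, HasDerivAt w (2 * g t * fderiv ℝ ψ (L t) e) t := by
    intro t
    have := (hgd t).pow 2
    simp at this
    exact this
  calc (‖ψ (c + a • e)‖₊ : ℝ≥0∞) ^ (2:ℕ) = (‖w a‖₊ : ℝ≥0∞) := by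
        simp [w, g, L, ← ENNReal.coe_pow, nnnorm_pow]
    _ ≤ ∫⁻ t in Iic a, ‖deriv w t‖₊ := HasCompactSupport.enorm_le_lintegral_Ici_deriv hwc hwK a
    _ ≤ ∫⁻ t, ‖deriv w t‖₊ := lintegral_mono' Measure.restrict_le_self le_rfl
    _ ≤ ∫⁻ t, 2 * ((‖ψ (c + t • e)‖₊ : ℝ≥0∞) * ‖fderiv ℝ ψ (c + t • e)‖₊) := by
        apply lintegral_mono
        intro t
        show (‖deriv w t‖₊ : ℝ≥0∞) ≤ _
        rw [(hwd t).deriv]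
        have he' : ‖e‖₊ = 1 := NNReal.coe_injective (by simp [he])
        have h1 : ‖2 * g t * fderiv ℝ ψ (L t) e‖₊ = 2 * (‖g t‖₊ * ‖fderiv ℝ ψ (L t) e‖₊) := by
          simp [nnnorm_mul, mul_assoc]
        rw [h1]
        push_cast
        gcongr 2 * ((?_ : ℝ≥0∞) * ?_)
        · exact le_rfl
        · calc (‖fderiv ℝ ψ (L t) e‖₊ : ℝ≥0∞) ≤ (‖fderiv ℝ ψ (L t)‖₊ : ℝ≥0∞) * ‖e‖₊ := by
                exact_mod_cast (fderiv ℝ ψ (L t)).le_opNNNorm e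
            _ = ‖fderiv ℝ ψ (c + t • e)‖₊ := by simp [L, he']
    _ = 2 * ∫⁻ t, (‖ψ (c + t • e)‖₊ : ℝ≥0∞) * ‖fderiv ℝ ψ (c + t • e)‖₊ :=
        lintegral_const_mul' _ _ (by norm_num)


-- the grand integral inequality : ∫ ψ^4 ≤ 4 * (∫ |ψ| |Dψ|)^2
lemma key2 {ψ : EuclideanSpace ℝ (Fin 2) → ℝ} (hψ : ContDiff ℝ 1 ψ)
    (h2ψ : HasCompactSupport ψ) :
    ∫⁻ x, (‖ψ x‖₊ : ℝ≥0∞) ^ (4:ℕ) ≤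
      4 * (∫⁻ x, (‖ψ x‖₊ : ℝ≥0∞) * ‖fderiv ℝ ψ x‖₊) ^ (2:ℕ) := by
  set e₀ : EuclideanSpace ℝ (Fin 2) := EuclideanSpace.single 0 1 with he₀
  set e₁ : EuclideanSpace ℝ (Fin 2) := EuclideanSpace.single 1 1 with he₁
  have he₀n : ‖e₀‖ = 1 := by simp [he₀]
  have he₁n : ‖e₁‖ = 1 := by simp [he₁]
  set P : ℝ × ℝ → EuclideanSpace ℝ (Fin 2) := fun z => z.1 • e₀ + z.2 • e₁ with hP
  have hPeq : P = ((MeasurableEquiv.toLp 2 (Fin 2 → ℝ)) ∘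
      (MeasurableEquiv.finTwoArrow (α := ℝ)).symm) := by
    funext z
    apply PiLp.ext
    intro i
    have hrfl : ((MeasurableEquiv.toLp 2 (Fin 2 → ℝ)) ∘
        (MeasurableEquiv.finTwoArrow (α := ℝ)).symm) z i = ![z.1, z.2] i := rfl
    rw [hrfl]
    fin_cases i <;> simp [P, e₀, e₁, EuclideanSpace.single_apply]
  have hPmp : MeasurePreserving P (volume : Measure (ℝ × ℝ)) volume := by
    rw [hPeq]
    exact ((EuclideanSpace.volume_preserving_symm_measurableEquiv_toLp (Fin 2)).symm).comp
      ((volume_preserving_finTwoArrow ℝ).symm)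
  have hPc : Continuous P := by fun_prop
  set h : EuclideanSpace ℝ (Fin 2) → ℝ≥0∞ := fun x => (‖ψ x‖₊ : ℝ≥0∞) * ‖fderiv ℝ ψ x‖₊
    with hh
  have hDc : Continuous (fderiv ℝ ψ) := hψ.continuous_fderiv one_ne_zero
  have hhm : Measurable h := by
    apply Measurable.mul (f := fun x => (‖ψ x‖₊ : ℝ≥0∞)) (g := fun x => (‖fderiv ℝ ψ x‖₊ : ℝ≥0∞))
    · exact hψ.continuous.measurable.nnnorm.coe_nnreal_ennreal
    · exact hDc.measurable.nnnorm.coe_nnreal_ennreal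
  -- coordinate decompositions
  have hdec1 : ∀ z : ℝ × ℝ, P z = P (0, z.2) + z.1 • e₀ := by
    intro z; simp only [P]; module
  have hdec2 : ∀ z : ℝ × ℝ, P z = P (z.1, 0) + z.2 • e₁ := by
    intro z; simp only [P]; module
  set F : ℝ → ℝ≥0∞ := fun b => 2 * ∫⁻ t : ℝ, h (P (t, b)) with hF
  set G : ℝ → ℝ≥0∞ := fun a => 2 * ∫⁻ t : ℝ, h (P (a, t)) with hG
  have hhPm : Measurable (fun z : ℝ × ℝ => h (P z)) := hhm.comp hPc.measurable
  have hFm : Measurable F := by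
    apply Measurable.const_mul
    exact Measurable.lintegral_prod_left (f := fun t b => h (P (t, b))) hhPm
  have hGm : Measurable G := by
    apply Measurable.const_mul
    exact Measurable.lintegral_prod_right (f := fun a t => h (P (a, t))) hhPm
  have hpoint : ∀ z : ℝ × ℝ, (‖ψ (P z)‖₊ : ℝ≥0∞) ^ (4:ℕ) ≤ G z.1 * F z.2 := by
    intro z
    have e1 : ∀ t : ℝ, P (0, z.2) + t • e₀ = P (t, z.2) := fun t => (hdec1 (t, z.2)).symm
    have e2 : ∀ t : ℝ, P (z.1, 0) + t • e₁ = P (z.1, t) := fun t => (hdec2 (z.1, t)).symm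
    have h1 : (‖ψ (P z)‖₊ : ℝ≥0∞) ^ (2:ℕ) ≤ F z.2 := by
      have := key1 hψ h2ψ he₀n (P (0, z.2)) z.1
      simp only [e1] at this
      simpa only [hF, hh] using this
    have h2 : (‖ψ (P z)‖₊ : ℝ≥0∞) ^ (2:ℕ) ≤ G z.1 := by
      have := key1 hψ h2ψ he₁n (P (z.1, 0)) z.2
      simp only [e2] at this
      simpa only [hG, hh] using this
    calc (‖ψ (P z)‖₊ : ℝ≥0∞) ^ (4:ℕ)
        = (‖ψ (P z)‖₊ : ℝ≥0∞) ^ (2:ℕ) * (‖ψ (P z)‖₊ : ℝ≥0∞) ^ (2:ℕ) := by ring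
      _ ≤ G z.1 * F z.2 := mul_le_mul' h2 h1
  set A : ℝ≥0∞ := ∫⁻ x, h x with hA
  have hFint : ∫⁻ b : ℝ, F b = 2 * A := by
    rw [hF]
    rw [lintegral_const_mul' _ _ (by norm_num)]
    congr 1
    calc ∫⁻ b : ℝ, ∫⁻ t : ℝ, h (P (t, b))
        = ∫⁻ z : ℝ × ℝ, h (P z) := by
          rw [MeasureTheory.Measure.volume_eq_prod, lintegral_prod_symm _ hhPm.aemeasurable]
      _ = A := hPmp.lintegral_comp hhm
  have hGint : ∫⁻ a : ℝ, G a = 2 * A := by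
    rw [hG]
    rw [lintegral_const_mul' _ _ (by norm_num)]
    congr 1
    calc ∫⁻ a : ℝ, ∫⁻ t : ℝ, h (P (a, t))
        = ∫⁻ z : ℝ × ℝ, h (P z) := by
          rw [MeasureTheory.Measure.volume_eq_prod, lintegral_prod _ hhPm.aemeasurable]
      _ = A := hPmp.lintegral_comp hhm
  calc ∫⁻ x, (‖ψ x‖₊ : ℝ≥0∞) ^ (4:ℕ)
      = ∫⁻ z : ℝ × ℝ, (‖ψ (P z)‖₊ : ℝ≥0∞) ^ (4:ℕ) :=
        (hPmp.lintegral_comp (by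
          exact (hψ.continuous.measurable.nnnorm.coe_nnreal_ennreal).pow_const _)).symm
    _ ≤ ∫⁻ z : ℝ × ℝ, G z.1 * F z.2 := lintegral_mono hpoint
    _ = (∫⁻ a : ℝ, G a) * ∫⁻ b : ℝ, F b := by
        rw [MeasureTheory.Measure.volume_eq_prod]
        exact lintegral_prod_mul hGm.aemeasurable hFm.aemeasurable
    _ = 4 * A ^ (2:ℕ) := by rw [hFint, hGint]; ring

lemma const_eq : (4:ℝ≥0∞) ^ ((1:ℝ)/4) = ENNReal.ofReal (Real.sqrt 2) := by
  rw [show (4:ℝ≥0∞) = ENNReal.ofReal (4:ℝ) by norm_num,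
    ENNReal.ofReal_rpow_of_pos (by norm_num)]
  congr 1
  rw [show (4:ℝ) = (2:ℝ) ^ (2:ℝ) by
      rw [show (2:ℝ) = ((2:ℕ):ℝ) from by norm_num, Real.rpow_natCast]; norm_num,
    ← Real.rpow_mul (by norm_num), Real.sqrt_eq_rpow]
  norm_num

lemma alg (S T : ℝ≥0∞) : (4 * (S ^ ((1:ℝ)/2) * T ^ ((1:ℝ)/2)) ^ (2:ℕ)) ^ ((1:ℝ)/4)
    = ENNReal.ofReal (Real.sqrt 2) * (S ^ ((1:ℝ)/2)) ^ ((1:ℝ)/2) * (T ^ ((1:ℝ)/2)) ^ ((1:ℝ)/2) := by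
  set a := S ^ ((1:ℝ)/2)
  set b := T ^ ((1:ℝ)/2)
  rw [← ENNReal.rpow_natCast (a * b) 2,
    ENNReal.mul_rpow_of_nonneg _ _ (by norm_num : (0:ℝ) ≤ (1:ℝ)/4),
    ← ENNReal.rpow_mul (a * b), const_eq,
    show ((2:ℕ):ℝ) * ((1:ℝ)/4) = ((1:ℝ)/2) by norm_num,
    ENNReal.mul_rpow_of_nonneg a b (by norm_num : (0:ℝ) ≤ (1:ℝ)/2), mul_assoc]

lemma key3 {ψ : EuclideanSpace ℝ (Fin 2) → ℝ} (hψ : ContDiff ℝ 1 ψ)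
    (h2ψ : HasCompactSupport ψ) :
    eLpNorm ψ 4 (volume : Measure (EuclideanSpace ℝ (Fin 2))) ≤
      ENNReal.ofReal (Real.sqrt 2) * (eLpNorm ψ 2 volume) ^ ((1:ℝ)/2) *
        (eLpNorm (fderiv ℝ ψ) 2 volume) ^ ((1:ℝ)/2) := by
  have hDc : Continuous (fderiv ℝ ψ) := hψ.continuous_fderiv one_ne_zero
  have hAle : (∫⁻ x, (‖ψ x‖₊ : ℝ≥0∞) * ‖fderiv ℝ ψ x‖₊) ≤
      (∫⁻ x, (‖ψ x‖₊ : ℝ≥0∞) ^ (2:ℝ)) ^ ((1:ℝ)/2) *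
        (∫⁻ x, (‖fderiv ℝ ψ x‖₊ : ℝ≥0∞) ^ (2:ℝ)) ^ ((1:ℝ)/2) := by
    have := ENNReal.lintegral_mul_le_Lp_mul_Lq (volume : Measure (EuclideanSpace ℝ (Fin 2)))
      (p := 2) (q := 2) ⟨by norm_num, by norm_num, by norm_num⟩
      (f := fun x => (‖ψ x‖₊ : ℝ≥0∞)) (g := fun x => (‖fderiv ℝ ψ x‖₊ : ℝ≥0∞))
      (hψ.continuous.measurable.nnnorm.coe_nnreal_ennreal.aemeasurable)
      (hDc.measurable.nnnorm.coe_nnreal_ennreal.aemeasurable)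
    simpa using this
  have h2 : eLpNorm ψ 2 (volume : Measure (EuclideanSpace ℝ (Fin 2)))
      = (∫⁻ x, (‖ψ x‖₊ : ℝ≥0∞) ^ (2:ℝ)) ^ ((1:ℝ)/2) := by
    rw [eLpNorm_eq_lintegral_rpow_enorm_toReal (by norm_num) (by norm_num)]
    norm_num
    rfl
  have h2' : eLpNorm (fderiv ℝ ψ) 2 (volume : Measure (EuclideanSpace ℝ (Fin 2)))
      = (∫⁻ x, (‖fderiv ℝ ψ x‖₊ : ℝ≥0∞) ^ (2:ℝ)) ^ ((1:ℝ)/2) := by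
    rw [eLpNorm_eq_lintegral_rpow_enorm_toReal (by norm_num) (by norm_num)]
    norm_num
    rfl
  have h4 : eLpNorm ψ 4 (volume : Measure (EuclideanSpace ℝ (Fin 2)))
      = (∫⁻ x, (‖ψ x‖₊ : ℝ≥0∞) ^ (4:ℝ)) ^ ((1:ℝ)/4) := by
    rw [eLpNorm_eq_lintegral_rpow_enorm_toReal (by norm_num) (by norm_num)]
    norm_num
    rfl
  rw [h4, h2, h2']
  calc (∫⁻ x, (‖ψ x‖₊ : ℝ≥0∞) ^ (4:ℝ)) ^ ((1:ℝ)/4)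
      ≤ (4 * (∫⁻ x, (‖ψ x‖₊ : ℝ≥0∞) * ‖fderiv ℝ ψ x‖₊) ^ (2:ℕ)) ^ ((1:ℝ)/4) := by
        apply ENNReal.rpow_le_rpow _ (by norm_num)
        calc ∫⁻ x, (‖ψ x‖₊ : ℝ≥0∞) ^ (4:ℝ)
            = ∫⁻ x, (‖ψ x‖₊ : ℝ≥0∞) ^ (4:ℕ) := by
              congr 1; funext x
              rw [← ENNReal.rpow_natCast]; norm_num
          _ ≤ _ := key2 hψ h2ψ
    _ ≤ (4 * ((∫⁻ x, (‖ψ x‖₊ : ℝ≥0∞) ^ (2:ℝ)) ^ ((1:ℝ)/2) *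
          (∫⁻ x, (‖fderiv ℝ ψ x‖₊ : ℝ≥0∞) ^ (2:ℝ)) ^ ((1:ℝ)/2)) ^ (2:ℕ)) ^ ((1:ℝ)/4) := by
        gcongr
    _ = ENNReal.ofReal (Real.sqrt 2) *
          ((∫⁻ x, (‖ψ x‖₊ : ℝ≥0∞) ^ (2:ℝ)) ^ ((1:ℝ)/2)) ^ ((1:ℝ)/2) *
          ((∫⁻ x, (‖fderiv ℝ ψ x‖₊ : ℝ≥0∞) ^ (2:ℝ)) ^ ((1:ℝ)/2)) ^ ((1:ℝ)/2) := alg _ _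

end LadyzhenskayaAux

/-- **Ladyzhenskaya inequality on an open set `U ⊆ ℝ²` for `H¹₀(U)` functions.**
`φ` belongs to `H¹₀(U)`: it is in `L²(U)`, it has a weak gradient `Dφ ∈ L²(U)`, and it can be
approximated in the `H¹` norm by smooth compactly supported functions with support in `U`.
Then `‖φ‖_{L⁴(U)} ≤ √2 ‖φ‖_{L²(U)}^{1/2} ‖∇φ‖_{L²(U)}^{1/2}`. -/
theorem ladyzhenskaya_H10
    (U : Set (EuclideanSpace ℝ (Fin 2))) (hU : IsOpen U)
    (φ : EuclideanSpace ℝ (Fin 2) → ℝ)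
    (Dφ : EuclideanSpace ℝ (Fin 2) → (EuclideanSpace ℝ (Fin 2) →L[ℝ] ℝ))
    (hφL2 : MemLp φ 2 (volume.restrict U))
    (hDφL2 : MemLp Dφ 2 (volume.restrict U))
    (happrox : ∀ δ : ℝ, 0 < δ → ∃ ψ : EuclideanSpace ℝ (Fin 2) → ℝ,
      ContDiff ℝ (⊤ : ℕ∞) ψ ∧ HasCompactSupport ψ ∧ tsupport ψ ⊆ U ∧
      eLpNorm (fun x => φ x - ψ x) 2 (volume.restrict U) < ENNReal.ofReal δ ∧
      eLpNorm (fun x => Dφ x - fderiv ℝ ψ x) 2 (volume.restrict U) < ENNReal.ofReal δ) :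
    eLpNorm φ 4 (volume.restrict U) ≤
      ENNReal.ofReal (Real.sqrt 2) *
        (eLpNorm φ 2 (volume.restrict U)) ^ ((1:ℝ)/2) *
        (eLpNorm Dφ 2 (volume.restrict U)) ^ ((1:ℝ)/2) := by
  classical
  set ν := volume.restrict U with hν
  have hpos : ∀ n : ℕ, (0:ℝ) < 1/(n+1) := fun n => by positivity
  choose ψ hsm hcp hsupp hL2 hDL2 using fun n : ℕ => happrox (1/(n+1)) (hpos n)
  set a := eLpNorm φ 2 ν with hadef
  set b := eLpNorm Dφ 2 ν with hbdef
  have ha : a ≠ ⊤ := hφL2.2.ne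
  have hb : b ≠ ⊤ := hDφL2.2.ne
  have hψm : ∀ n, AEStronglyMeasurable (ψ n) ν :=
    fun n => ((hsm n).continuous).aestronglyMeasurable
  have hDψm : ∀ n, AEStronglyMeasurable (fderiv ℝ (ψ n)) ν :=
    fun n => ((hsm n).continuous_fderiv (by simp)).aestronglyMeasurable
  set d : ℕ → ℝ≥0∞ := fun n => ENNReal.ofReal (1/(n+1)) with hd
  -- L² bounds on the approximants
  have hbnd2 : ∀ n, eLpNorm (ψ n) 2 ν ≤ a + d n := by
    intro n
    have h1 : eLpNorm (ψ n) 2 ν = eLpNorm (φ - (φ - ψ n)) 2 ν := by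
      apply eLpNorm_congr_ae
      filter_upwards with x
      simp [sub_sub_cancel]
    rw [h1]
    refine (eLpNorm_sub_le hφL2.aestronglyMeasurable
      (hφL2.aestronglyMeasurable.sub (hψm n)) one_le_two).trans ?_
    exact add_le_add le_rfl (hL2 n).le
  have hbndD : ∀ n, eLpNorm (fderiv ℝ (ψ n)) 2 ν ≤ b + d n := by
    intro n
    have h1 : eLpNorm (fderiv ℝ (ψ n)) 2 ν = eLpNorm (Dφ - (Dφ - fderiv ℝ (ψ n))) 2 ν := by
      apply eLpNorm_congr_ae
      filter_upwards with x
      simp [sub_sub_cancel]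
    rw [h1]
    refine (eLpNorm_sub_le hDφL2.aestronglyMeasurable
      (hDφL2.aestronglyMeasurable.sub (hDψm n)) one_le_two).trans ?_
    exact add_le_add le_rfl (hDL2 n).le
  -- smooth estimates, restricted
  have hsmooth : ∀ n, eLpNorm (ψ n) 4 ν ≤
      ENNReal.ofReal (Real.sqrt 2) * (eLpNorm (ψ n) 2 ν) ^ ((1:ℝ)/2) *
        (eLpNorm (fderiv ℝ (ψ n)) 2 ν) ^ ((1:ℝ)/2) := by
    intro n
    have r4 : eLpNorm (ψ n) 4 ν = eLpNorm (ψ n) 4 volume :=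
      eLpNorm_restrict_eq_of_support_subset ((subset_tsupport _).trans (hsupp n))
    have r2 : eLpNorm (ψ n) 2 ν = eLpNorm (ψ n) 2 volume :=
      eLpNorm_restrict_eq_of_support_subset ((subset_tsupport _).trans (hsupp n))
    have rD : eLpNorm (fderiv ℝ (ψ n)) 2 ν = eLpNorm (fderiv ℝ (ψ n)) 2 volume :=
      eLpNorm_restrict_eq_of_support_subset (f := fderiv ℝ (ψ n))
        ((support_fderiv_subset ℝ (f := ψ n)).trans (hsupp n))
    rw [r4, r2, rD]
    exact key3 ((hsm n).of_le (by simp)) (hcp n)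
  set c : ℕ → ℝ≥0∞ := fun n =>
    ENNReal.ofReal (Real.sqrt 2) * (a + d n) ^ ((1:ℝ)/2) * (b + d n) ^ ((1:ℝ)/2) with hc
  have hbound : ∀ n, eLpNorm (ψ n) 4 ν ≤ c n := by
    intro n
    refine (hsmooth n).trans ?_
    exact mul_le_mul'
      (mul_le_mul' le_rfl (ENNReal.rpow_le_rpow (hbnd2 n) (by norm_num)))
      (ENNReal.rpow_le_rpow (hbndD n) (by norm_num))
  -- convergence in measure and a.e. subsequence
  have hd0 : Tendsto d atTop (𝓝 0) := by
    rw [hd, show (0:ℝ≥0∞) = ENNReal.ofReal 0 by simp]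
    exact ENNReal.tendsto_ofReal tendsto_one_div_add_atTop_nhds_zero_nat
  have htend0 : Tendsto (fun n => eLpNorm (ψ n - φ) 2 ν) atTop (𝓝 0) := by
    apply tendsto_of_tendsto_of_tendsto_of_le_of_le tendsto_const_nhds hd0
    · exact fun n => zero_le
    · intro n
      dsimp only
      rw [eLpNorm_sub_comm]
      exact (hL2 n).le
  have htm : TendstoInMeasure ν ψ atTop φ :=
    tendstoInMeasure_of_tendsto_eLpNorm (p := 2) (by norm_num) hψm
      hφL2.aestronglyMeasurable htend0
  obtain ⟨ns, hns, hae⟩ := htm.exists_seq_tendsto_ae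
  have hFatou : eLpNorm φ 4 ν ≤ atTop.liminf fun i => eLpNorm (ψ (ns i)) 4 ν :=
    Lp.eLpNorm_lim_le_liminf_eLpNorm (fun i => hψm (ns i)) φ hae
  -- limit of the bounds
  have hdns : Tendsto (fun i => d (ns i)) atTop (𝓝 0) := hd0.comp hns.tendsto_atTop
  have hta : Tendsto (fun i => (a + d (ns i)) ^ ((1:ℝ)/2)) atTop (𝓝 (a ^ ((1:ℝ)/2))) := by
    have h1 : Tendsto (fun i => a + d (ns i)) atTop (𝓝 a) := by
      simpa using tendsto_const_nhds.add hdns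
    exact (ENNReal.continuous_rpow_const.tendsto a).comp h1
  have htb : Tendsto (fun i => (b + d (ns i)) ^ ((1:ℝ)/2)) atTop (𝓝 (b ^ ((1:ℝ)/2))) := by
    have h1 : Tendsto (fun i => b + d (ns i)) atTop (𝓝 b) := by
      simpa using tendsto_const_nhds.add hdns
    exact (ENNReal.continuous_rpow_const.tendsto b).comp h1
  have hmul : Tendsto (fun i => (a + d (ns i)) ^ ((1:ℝ)/2) * (b + d (ns i)) ^ ((1:ℝ)/2))
      atTop (𝓝 (a ^ ((1:ℝ)/2) * b ^ ((1:ℝ)/2))) := by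
    apply ENNReal.Tendsto.mul hta ?_ htb ?_
    · exact Or.inr (ENNReal.rpow_ne_top_of_nonneg (by norm_num) hb)
    · exact Or.inr (ENNReal.rpow_ne_top_of_nonneg (by norm_num) ha)
  have hcTend : Tendsto (fun i => c (ns i)) atTop
      (𝓝 (ENNReal.ofReal (Real.sqrt 2) * (a ^ ((1:ℝ)/2) * b ^ ((1:ℝ)/2)))) := by
    have := ENNReal.Tendsto.const_mul (a := ENNReal.ofReal (Real.sqrt 2)) hmul
      (Or.inr ENNReal.ofReal_ne_top)
    simpa [hc, mul_assoc] using this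
  calc eLpNorm φ 4 ν ≤ atTop.liminf fun i => eLpNorm (ψ (ns i)) 4 ν := hFatou
    _ ≤ atTop.liminf fun i => c (ns i) :=
        liminf_le_liminf (Eventually.of_forall fun i => hbound (ns i))
    _ = ENNReal.ofReal (Real.sqrt 2) * (a ^ ((1:ℝ)/2) * b ^ ((1:ℝ)/2)) := hcTend.liminf_eq
    _ = ENNReal.ofReal (Real.sqrt 2) * a ^ ((1:ℝ)/2) * b ^ ((1:ℝ)/2) := by rw [mul_assoc]
end

section
/- For any smooth compactly supported function φ on ℝ², one has ‖φ‖_{L⁴(ℝ²)}⁴ ≤ 4 ‖φ‖_{L²(ℝ²)}² ‖∇φ‖_{L²(ℝ²)}². -/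
open MeasureTheory Set Topology
open scoped ENNReal NNReal

namespace LadyzhenskayaAux

/-- The canonical linear measure-preserving identification `ℝ × ℝ ≃ ℝ²` (Euclidean). -/
noncomputable def L2 : (ℝ × ℝ) ≃L[ℝ] EuclideanSpace ℝ (Fin 2) :=
  (ContinuousLinearEquiv.finTwoArrow ℝ ℝ).symm.trans
    (EuclideanSpace.equiv (Fin 2) ℝ).symm

lemma L2_mp : MeasurePreserving (⇑L2 : ℝ × ℝ → EuclideanSpace ℝ (Fin 2)) volume volume := by
  have h1 := (volume_preserving_finTwoArrow ℝ).symm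
  have h2 := (EuclideanSpace.volume_preserving_symm_measurableEquiv_toLp (Fin 2)).symm
  have key := h2.comp h1
  have : (⇑(MeasurableEquiv.toLp 2 (Fin 2 → ℝ)).symm.symm ∘
      ⇑(MeasurableEquiv.finTwoArrow (α := ℝ)).symm) = ⇑L2 := by
    funext p
    rfl
  rwa [this] at key

lemma norm_L2_e1 : ‖L2 (1, 0)‖ = 1 := by
  have h0 : L2 (1, 0) 0 = 1 := rfl
  have h1 : L2 (1, 0) 1 = 0 := rfl
  rw [EuclideanSpace.norm_eq, Fin.sum_univ_two, h0, h1]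
  norm_num

lemma norm_L2_e2 : ‖L2 (0, 1)‖ = 1 := by
  have h0 : L2 (0, 1) 0 = 0 := rfl
  have h1 : L2 (0, 1) 1 = 1 := rfl
  rw [EuclideanSpace.norm_eq, Fin.sum_univ_two, h0, h1]
  norm_num

/-- 1D fundamental-theorem-of-calculus bound along the first coordinate. -/
lemma slice_bound_fst (w : ℝ × ℝ → ℝ) (hw : ContDiff ℝ 1 w)
    (hws : HasCompactSupport w) (s t : ℝ) :
    (‖w (s, t)‖₊ : ℝ≥0∞) ≤ ∫⁻ σ, (‖fderiv ℝ w (σ, t) (1, 0)‖₊ : ℝ≥0∞) := by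
  set f : ℝ → ℝ := fun σ => w (σ, t) with hf
  have hemb : IsClosedEmbedding (fun σ : ℝ => (σ, t)) := by
    apply Isometry.isClosedEmbedding
    intro x y
    simp [Prod.edist_eq]
  have hfc : ContDiff ℝ 1 f := hw.comp (contDiff_id.prodMk contDiff_const)
  have hfs : HasCompactSupport f := hws.comp_isClosedEmbedding hemb
  have hfd : ∀ σ : ℝ, HasDerivAt f (fderiv ℝ w (σ, t) (1, 0)) σ := by
    intro σ
    have h1 : HasDerivAt (fun σ : ℝ => (σ, t)) (1, 0) σ :=
      (hasDerivAt_id σ).prodMk (hasDerivAt_const σ t)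
    exact ((hw.differentiable one_ne_zero (σ, t)).hasFDerivAt).comp_hasDerivAt σ h1
  calc (‖f s‖₊ : ℝ≥0∞)
      ≤ ∫⁻ σ in Iic s, (‖deriv f σ‖₊ : ℝ≥0∞) := hfs.enorm_le_lintegral_Ici_deriv hfc s
    _ ≤ ∫⁻ σ, (‖deriv f σ‖₊ : ℝ≥0∞) := lintegral_mono' Measure.restrict_le_self le_rfl
    _ = ∫⁻ σ, (‖fderiv ℝ w (σ, t) (1, 0)‖₊ : ℝ≥0∞) := by
        congr 1; funext σ; rw [(hfd σ).deriv]

/-- 1D fundamental-theorem-of-calculus bound along the second coordinate. -/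
lemma slice_bound_snd (w : ℝ × ℝ → ℝ) (hw : ContDiff ℝ 1 w)
    (hws : HasCompactSupport w) (s t : ℝ) :
    (‖w (s, t)‖₊ : ℝ≥0∞) ≤ ∫⁻ τ, (‖fderiv ℝ w (s, τ) (0, 1)‖₊ : ℝ≥0∞) := by
  set f : ℝ → ℝ := fun τ => w (s, τ) with hf
  have hemb : IsClosedEmbedding (fun τ : ℝ => (s, τ)) := by
    apply Isometry.isClosedEmbedding
    intro x y
    simp [Prod.edist_eq]
  have hfc : ContDiff ℝ 1 f := hw.comp (contDiff_const.prodMk contDiff_id)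
  have hfs : HasCompactSupport f := hws.comp_isClosedEmbedding hemb
  have hfd : ∀ τ : ℝ, HasDerivAt f (fderiv ℝ w (s, τ) (0, 1)) τ := by
    intro τ
    have h1 : HasDerivAt (fun τ : ℝ => (s, τ)) (0, 1) τ :=
      (hasDerivAt_const τ s).prodMk (hasDerivAt_id τ)
    exact ((hw.differentiable one_ne_zero (s, τ)).hasFDerivAt).comp_hasDerivAt τ h1
  calc (‖f t‖₊ : ℝ≥0∞)
      ≤ ∫⁻ τ in Iic t, (‖deriv f τ‖₊ : ℝ≥0∞) := hfs.enorm_le_lintegral_Ici_deriv hfc t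
    _ ≤ ∫⁻ τ, (‖deriv f τ‖₊ : ℝ≥0∞) := lintegral_mono' Measure.restrict_le_self le_rfl
    _ = ∫⁻ τ, (‖fderiv ℝ w (s, τ) (0, 1)‖₊ : ℝ≥0∞) := by
        congr 1; funext τ; rw [(hfd τ).deriv]

/-- Key 2D inequality (sharp Ladyzhenskaya step):
`∫ ψ⁴ ≤ 4 (∫ |ψ| |∂₁ψ|) (∫ |ψ| |∂₂ψ|)`. -/
lemma key (ψ : ℝ × ℝ → ℝ) (hψ : ContDiff ℝ 1 ψ) (hs : HasCompactSupport ψ) :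
    ∫⁻ z, (‖ψ z‖₊ : ℝ≥0∞) ^ (4 : ℕ) ≤
      4 * (∫⁻ z, (‖ψ z‖₊ : ℝ≥0∞) * (‖fderiv ℝ ψ z (1, 0)‖₊ : ℝ≥0∞)) *
        (∫⁻ z, (‖ψ z‖₊ : ℝ≥0∞) * (‖fderiv ℝ ψ z (0, 1)‖₊ : ℝ≥0∞)) := by
  set w : ℝ × ℝ → ℝ := fun z => ψ z * ψ z with hwdef
  have hw : ContDiff ℝ 1 w := hψ.mul hψ
  have hws : HasCompactSupport w := hs.mul_left
  have hdψ : ∀ z, DifferentiableAt ℝ ψ z := fun z => hψ.differentiable one_ne_zero z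
  have hfw : ∀ z v, fderiv ℝ w z v = 2 * (ψ z * fderiv ℝ ψ z v) := by
    intro z v
    have := fderiv_fun_mul (hdψ z) (hdψ z)
    rw [hwdef]
    rw [this]
    simp
    ring
  have hfwn : ∀ z v, (‖fderiv ℝ w z v‖₊ : ℝ≥0∞) =
      2 * ((‖ψ z‖₊ : ℝ≥0∞) * (‖fderiv ℝ ψ z v‖₊ : ℝ≥0∞)) := by
    intro z v
    rw [hfw z v]
    push_cast [nnnorm_mul]
    norm_num
  -- measurability
  have hcontfw : Continuous (fun z => fderiv ℝ w z) := hw.continuous_fderiv one_ne_zero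
  have hg0 : Measurable (fun z : ℝ × ℝ => (‖fderiv ℝ w z (1, 0)‖₊ : ℝ≥0∞)) :=
    (hcontfw.clm_apply continuous_const).nnnorm.measurable.coe_nnreal_ennreal
  have hg1 : Measurable (fun z : ℝ × ℝ => (‖fderiv ℝ w z (0, 1)‖₊ : ℝ≥0∞)) :=
    (hcontfw.clm_apply continuous_const).nnnorm.measurable.coe_nnreal_ennreal
  set A : ℝ → ℝ≥0∞ := fun t => ∫⁻ σ, (‖fderiv ℝ w (σ, t) (1, 0)‖₊ : ℝ≥0∞) with hA
  set B : ℝ → ℝ≥0∞ := fun s => ∫⁻ τ, (‖fderiv ℝ w (s, τ) (0, 1)‖₊ : ℝ≥0∞) with hB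
  have hAm : Measurable A := Measurable.lintegral_prod_left hg0
  have hBm : Measurable B := Measurable.lintegral_prod_right hg1
  have claimA : ∀ s t : ℝ, (‖ψ (s, t)‖₊ : ℝ≥0∞) ^ (2 : ℕ) ≤ A t := by
    intro s t
    have : (‖ψ (s, t)‖₊ : ℝ≥0∞) ^ (2 : ℕ) = (‖w (s, t)‖₊ : ℝ≥0∞) := by
      rw [hwdef]; push_cast [nnnorm_mul]; ring
    rw [this]
    exact slice_bound_fst w hw hws s t
  have claimB : ∀ s t : ℝ, (‖ψ (s, t)‖₊ : ℝ≥0∞) ^ (2 : ℕ) ≤ B s := by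
    intro s t
    have : (‖ψ (s, t)‖₊ : ℝ≥0∞) ^ (2 : ℕ) = (‖w (s, t)‖₊ : ℝ≥0∞) := by
      rw [hwdef]; push_cast [nnnorm_mul]; ring
    rw [this]
    exact slice_bound_snd w hw hws s t
  have hvol : (volume : Measure (ℝ × ℝ)) =
      (volume : Measure ℝ).prod (volume : Measure ℝ) := Measure.volume_eq_prod ℝ ℝ
  calc ∫⁻ z, (‖ψ z‖₊ : ℝ≥0∞) ^ (4 : ℕ)
      ≤ ∫⁻ z : ℝ × ℝ, B z.1 * A z.2 := by
        apply lintegral_mono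
        intro z
        have h1 := claimB z.1 z.2
        have h2 := claimA z.1 z.2
        calc (‖ψ z‖₊ : ℝ≥0∞) ^ (4 : ℕ)
            = (‖ψ (z.1, z.2)‖₊ : ℝ≥0∞) ^ (2 : ℕ) * (‖ψ (z.1, z.2)‖₊ : ℝ≥0∞) ^ (2 : ℕ) := by
              rw [Prod.mk.eta]; ring
          _ ≤ B z.1 * A z.2 := mul_le_mul' h1 h2
    _ = (∫⁻ s, B s) * (∫⁻ t, A t) := by
        rw [hvol]
        exact lintegral_prod_mul hBm.aemeasurable hAm.aemeasurable
    _ = (∫⁻ z, (‖fderiv ℝ w z (0, 1)‖₊ : ℝ≥0∞)) * (∫⁻ z, (‖fderiv ℝ w z (1, 0)‖₊ : ℝ≥0∞)) := by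
        congr 1
        · rw [hvol, lintegral_prod _ hg1.aemeasurable]
        · rw [hvol, lintegral_prod_symm _ hg0.aemeasurable]
    _ = (∫⁻ z, 2 * ((‖ψ z‖₊ : ℝ≥0∞) * (‖fderiv ℝ ψ z (0, 1)‖₊ : ℝ≥0∞))) *
        (∫⁻ z, 2 * ((‖ψ z‖₊ : ℝ≥0∞) * (‖fderiv ℝ ψ z (1, 0)‖₊ : ℝ≥0∞))) := by
        congr 1 <;> · congr 1; funext z; rw [hfwn]
    _ = 4 * (∫⁻ z, (‖ψ z‖₊ : ℝ≥0∞) * (‖fderiv ℝ ψ z (1, 0)‖₊ : ℝ≥0∞)) *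
        (∫⁻ z, (‖ψ z‖₊ : ℝ≥0∞) * (‖fderiv ℝ ψ z (0, 1)‖₊ : ℝ≥0∞)) := by
        rw [lintegral_const_mul' 2 _ (by norm_num), lintegral_const_mul' 2 _ (by norm_num)]
        ring

end LadyzhenskayaAux

open LadyzhenskayaAux

/-- **Ladyzhenskaya inequality on `ℝ²` for smooth compactly supported functions:**
`‖φ‖_{L⁴(ℝ²)}⁴ ≤ 4 ‖φ‖_{L²(ℝ²)}² ‖∇φ‖_{L²(ℝ²)}²`. -/
theorem ladyzhenskaya_smooth_compact_support
    (φ : EuclideanSpace ℝ (Fin 2) → ℝ)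
    (hφ : ContDiff ℝ (⊤ : ℕ∞) φ) (hsupp : HasCompactSupport φ) :
    (eLpNorm φ 4 volume) ^ (4 : ℕ) ≤
      4 * (eLpNorm φ 2 volume) ^ (2 : ℕ) *
        (eLpNorm (fun x => fderiv ℝ φ x) 2 volume) ^ (2 : ℕ) := by
  classical
  set ψ : ℝ × ℝ → ℝ := fun p => φ (L2 p) with hψdef
  have hφ1 : ContDiff ℝ 1 φ := hφ.of_le (by simp)
  have hψ : ContDiff ℝ 1 ψ := hφ1.comp L2.contDiff
  have hs : HasCompactSupport ψ := hsupp.comp_homeomorph L2.toHomeomorph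
  have hdφ : ∀ x, DifferentiableAt ℝ φ x := fun x => hφ1.differentiable one_ne_zero x
  have hfψ : ∀ z, fderiv ℝ ψ z =
      (fderiv ℝ φ (L2 z)).comp (L2 : (ℝ × ℝ) →L[ℝ] EuclideanSpace ℝ (Fin 2)) := by
    intro z
    rw [hψdef, show (fun p => φ (L2 p)) = φ ∘ ⇑L2 from rfl]
    rw [fderiv_comp z (hdφ (L2 z)) L2.differentiableAt, L2.fderiv]
  -- directional derivative bounds
  have hdir1 : ∀ z, (‖fderiv ℝ ψ z (1, 0)‖₊ : ℝ≥0∞) ≤ (‖fderiv ℝ φ (L2 z)‖₊ : ℝ≥0∞) := by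
    intro z
    rw [hfψ z]
    have : ‖(fderiv ℝ φ (L2 z)) (L2 (1, 0))‖ ≤ ‖fderiv ℝ φ (L2 z)‖ * ‖L2 (1, 0)‖ :=
      (fderiv ℝ φ (L2 z)).le_opNorm _
    rw [norm_L2_e1, mul_one] at this
    exact_mod_cast ENNReal.coe_le_coe.mpr (by exact_mod_cast this)
  have hdir2 : ∀ z, (‖fderiv ℝ ψ z (0, 1)‖₊ : ℝ≥0∞) ≤ (‖fderiv ℝ φ (L2 z)‖₊ : ℝ≥0∞) := by
    intro z
    rw [hfψ z]
    have : ‖(fderiv ℝ φ (L2 z)) (L2 (0, 1))‖ ≤ ‖fderiv ℝ φ (L2 z)‖ * ‖L2 (0, 1)‖ :=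
      (fderiv ℝ φ (L2 z)).le_opNorm _
    rw [norm_L2_e2, mul_one] at this
    exact_mod_cast ENNReal.coe_le_coe.mpr (by exact_mod_cast this)
  -- measurability
  have hψcont : Continuous ψ := hψ.continuous
  have hψm : Measurable (fun z => (‖ψ z‖₊ : ℝ≥0∞)) :=
    hψcont.nnnorm.measurable.coe_nnreal_ennreal
  have hDφcont : Continuous (fun x => fderiv ℝ φ x) := hφ.continuous_fderiv (by simp)
  have hDm : Measurable (fun z => (‖fderiv ℝ φ (L2 z)‖₊ : ℝ≥0∞)) :=
    ((hDφcont.comp L2.continuous).nnnorm).measurable.coe_nnreal_ennreal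
  have hD1cont : Continuous (fun z => fderiv ℝ ψ z) := hψ.continuous_fderiv one_ne_zero
  have hD1m : ∀ v : ℝ × ℝ, Measurable (fun z => (‖fderiv ℝ ψ z v‖₊ : ℝ≥0∞)) := fun v =>
    ((hD1cont.clm_apply continuous_const).nnnorm).measurable.coe_nnreal_ennreal
  -- Cauchy-Schwarz applied to each factor
  have hCS : ∀ v : ℝ × ℝ,
      (‖fderiv ℝ ψ · v‖₊ : ℝ × ℝ → ℝ≥0) = (‖fderiv ℝ ψ · v‖₊) := fun _ => rfl
  have two_conj : Real.HolderConjugate 2 2 := by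
    exact Real.HolderConjugate.two_two
  have CS : ∀ (g : ℝ × ℝ → ℝ≥0∞), Measurable g →
      (∫⁻ z, (‖ψ z‖₊ : ℝ≥0∞) * g z) ≤
        (∫⁻ z, (‖ψ z‖₊ : ℝ≥0∞) ^ (2 : ℝ)) ^ (1 / (2 : ℝ)) *
          (∫⁻ z, g z ^ (2 : ℝ)) ^ (1 / (2 : ℝ)) := by
    intro g hg
    exact ENNReal.lintegral_mul_le_Lp_mul_Lq volume two_conj hψm.aemeasurable hg.aemeasurable
  -- combine
  have main : (∫⁻ z, (‖ψ z‖₊ : ℝ≥0∞) ^ (4 : ℕ)) ≤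
      4 * (∫⁻ z, (‖ψ z‖₊ : ℝ≥0∞) ^ (2 : ℕ)) *
        (∫⁻ z, (‖fderiv ℝ φ (L2 z)‖₊ : ℝ≥0∞) ^ (2 : ℕ)) := by
    have h1 := CS _ (hD1m (1, 0))
    have h2 := CS _ (hD1m (0, 1))
    have hmonD : ∀ v, (∀ z, (‖fderiv ℝ ψ z v‖₊ : ℝ≥0∞) ≤ (‖fderiv ℝ φ (L2 z)‖₊ : ℝ≥0∞)) →
        (∫⁻ z, (‖fderiv ℝ ψ z v‖₊ : ℝ≥0∞) ^ (2 : ℝ)) ≤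
          (∫⁻ z, (‖fderiv ℝ φ (L2 z)‖₊ : ℝ≥0∞) ^ (2 : ℝ)) := by
      intro v hv
      apply lintegral_mono
      intro z
      exact ENNReal.rpow_le_rpow (hv z) (by norm_num)
    have hb1 := hmonD _ hdir1
    have hb2 := hmonD _ hdir2
    set X : ℝ≥0∞ := ∫⁻ z, (‖ψ z‖₊ : ℝ≥0∞) ^ (2 : ℝ) with hX
    set Y : ℝ≥0∞ := ∫⁻ z, (‖fderiv ℝ φ (L2 z)‖₊ : ℝ≥0∞) ^ (2 : ℝ) with hY
    have sqrt_mul : ∀ (a : ℝ≥0∞), a ^ (1 / (2 : ℝ)) * a ^ (1 / (2 : ℝ)) = a := by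
      intro a
      rw [← ENNReal.rpow_add_of_nonneg _ _ (by norm_num) (by norm_num)]
      norm_num
    calc (∫⁻ z, (‖ψ z‖₊ : ℝ≥0∞) ^ (4 : ℕ))
        ≤ 4 * (∫⁻ z, (‖ψ z‖₊ : ℝ≥0∞) * (‖fderiv ℝ ψ z (1, 0)‖₊ : ℝ≥0∞)) *
          (∫⁻ z, (‖ψ z‖₊ : ℝ≥0∞) * (‖fderiv ℝ ψ z (0, 1)‖₊ : ℝ≥0∞)) := key ψ hψ hs
      _ ≤ 4 * (X ^ (1 / (2 : ℝ)) * (∫⁻ z, (‖fderiv ℝ ψ z (1, 0)‖₊ : ℝ≥0∞) ^ (2 : ℝ)) ^ (1 / (2 : ℝ))) *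
          (X ^ (1 / (2 : ℝ)) * (∫⁻ z, (‖fderiv ℝ ψ z (0, 1)‖₊ : ℝ≥0∞) ^ (2 : ℝ)) ^ (1 / (2 : ℝ))) := by
          exact mul_le_mul' (mul_le_mul' le_rfl h1) h2
      _ ≤ 4 * (X ^ (1 / (2 : ℝ)) * Y ^ (1 / (2 : ℝ))) * (X ^ (1 / (2 : ℝ)) * Y ^ (1 / (2 : ℝ))) := by
          exact mul_le_mul' (mul_le_mul' le_rfl (mul_le_mul' le_rfl
            (ENNReal.rpow_le_rpow hb1 (by norm_num)))) (mul_le_mul' le_rfl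
            (ENNReal.rpow_le_rpow hb2 (by norm_num)))
      _ = 4 * (X ^ (1 / (2 : ℝ)) * X ^ (1 / (2 : ℝ))) * (Y ^ (1 / (2 : ℝ)) * Y ^ (1 / (2 : ℝ))) := by
          ring
      _ = 4 * X * Y := by rw [sqrt_mul, sqrt_mul]
      _ = 4 * (∫⁻ z, (‖ψ z‖₊ : ℝ≥0∞) ^ (2 : ℕ)) *
          (∫⁻ z, (‖fderiv ℝ φ (L2 z)‖₊ : ℝ≥0∞) ^ (2 : ℕ)) := by
          rw [hX, hY]
          congr 1
          · congr 1
            congr 1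
            funext z
            rw [← ENNReal.rpow_natCast]
            norm_num
          · congr 1
            funext z
            rw [← ENNReal.rpow_natCast]
            norm_num
  -- transfer integrals back to E via the measure-preserving map
  have t4 : (∫⁻ z, (‖ψ z‖₊ : ℝ≥0∞) ^ (4 : ℕ)) = ∫⁻ x, (‖φ x‖₊ : ℝ≥0∞) ^ (4 : ℕ) := by
    have := L2_mp.lintegral_comp
      (f := fun x => (‖φ x‖₊ : ℝ≥0∞) ^ (4 : ℕ))
      ((hφ1.continuous.nnnorm.measurable.coe_nnreal_ennreal).pow_const _)
    exact this
  have t2 : (∫⁻ z, (‖ψ z‖₊ : ℝ≥0∞) ^ (2 : ℕ)) = ∫⁻ x, (‖φ x‖₊ : ℝ≥0∞) ^ (2 : ℕ) := by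
    have := L2_mp.lintegral_comp
      (f := fun x => (‖φ x‖₊ : ℝ≥0∞) ^ (2 : ℕ))
      ((hφ1.continuous.nnnorm.measurable.coe_nnreal_ennreal).pow_const _)
    exact this
  have tD : (∫⁻ z, (‖fderiv ℝ φ (L2 z)‖₊ : ℝ≥0∞) ^ (2 : ℕ)) =
      ∫⁻ x, (‖fderiv ℝ φ x‖₊ : ℝ≥0∞) ^ (2 : ℕ) := by
    have := L2_mp.lintegral_comp
      (f := fun x => (‖fderiv ℝ φ x‖₊ : ℝ≥0∞) ^ (2 : ℕ))
      ((hDφcont.nnnorm.measurable.coe_nnreal_ennreal).pow_const _)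
    exact this
  rw [t4, t2, tD] at main
  -- convert eLpNorm powers to lintegrals
  have e4 : (eLpNorm φ 4 volume) ^ (4 : ℕ) = ∫⁻ x, (‖φ x‖₊ : ℝ≥0∞) ^ (4 : ℕ) := by
    rw [eLpNorm_eq_lintegral_rpow_enorm (by norm_num) (by norm_num)]; simp only [enorm_eq_nnnorm]
    rw [← ENNReal.rpow_natCast _ 4, ← ENNReal.rpow_mul]
    norm_num
  have e2 : (eLpNorm φ 2 volume) ^ (2 : ℕ) = ∫⁻ x, (‖φ x‖₊ : ℝ≥0∞) ^ (2 : ℕ) := by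
    rw [eLpNorm_eq_lintegral_rpow_enorm (by norm_num) (by norm_num)]; simp only [enorm_eq_nnnorm]
    rw [← ENNReal.rpow_natCast _ 2, ← ENNReal.rpow_mul]
    norm_num
  have eD : (eLpNorm (fun x => fderiv ℝ φ x) 2 volume) ^ (2 : ℕ) =
      ∫⁻ x, (‖fderiv ℝ φ x‖₊ : ℝ≥0∞) ^ (2 : ℕ) := by
    rw [eLpNorm_eq_lintegral_rpow_enorm (by norm_num) (by norm_num)]; simp only [enorm_eq_nnnorm]
    rw [← ENNReal.rpow_natCast _ 2, ← ENNReal.rpow_mul]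
    norm_num
  rw [e4, e2, eD]
  exact main
end
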